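/- Let x_1 = (1 2) and x_2 = (2 3) in the symmetric group S_3, let H_1 = ⟨x_1⟩ and H_2 = ⟨x_2⟩ (each cyclic of order 2), and let p : H_1 ∗ H_2 → S_3 be the homomorphism from the free product induced by the inclusions. Then p is surjective and its kernel is the infinite cyclic subgroup generated by the element (ι_1(x_1)·ι_2(x_2))³; in particular Ker p ≅ ℤ. -/
import Mathlib

open Monoid

/-- The transposition `x₁ = (1 2)` in `S₃`. -/
def x1Perm : Equiv.Perm (Fin 3) := Equiv.swap 0 1

/-- The transposition `x₂ = (2 3)` in `S₃`. -/
def x2Perm : Equiv.Perm (Fin 3) := Equiv.swap 1 2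

/-- The homomorphism `p : H₁ ∗ H₂ → S₃` from the free product of `H₁ = ⟨x₁⟩` and
`H₂ = ⟨x₂⟩` induced by the inclusions. -/
def pS3' : Coprod (Subgroup.zpowers x1Perm) (Subgroup.zpowers x2Perm) →* Equiv.Perm (Fin 3) :=
  Coprod.lift (Subgroup.zpowers x1Perm).subtype (Subgroup.zpowers x2Perm).subtype

namespace S3Aux

lemma x1_sq : x1Perm * x1Perm = 1 := by decide
lemma x2_sq : x2Perm * x2Perm = 1 := by decide

lemma mem_zpowers_of_sq {G : Type*} [Group G] {g x : G} (hg : g * g = 1)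
    (hx : x ∈ Subgroup.zpowers g) : x = 1 ∨ x = g := by
  obtain ⟨k, rfl⟩ := hx
  have h2 : g ^ (2 : ℤ) = 1 := by rw [zpow_two]; exact hg
  have hk : g ^ k = g ^ (k % 2) := by
    conv_lhs => rw [← Int.mul_ediv_add_emod k 2]
    rw [zpow_add, zpow_mul, h2, one_zpow, one_mul]
  rcases Int.emod_two_eq k with h | h
  · left; show g ^ k = 1; rw [hk, h, zpow_zero]
  · right; show g ^ k = g; rw [hk, h, zpow_one]

/-- A homomorphism out of the cyclic group generated by an involution, sending the
generator to an involution. -/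
def invoHom {G K : Type*} [Group G] [Group K] [DecidableEq G] (g : G) (hg : g * g = 1)
    (A : K) (hA : A * A = 1) : Subgroup.zpowers g →* K where
  toFun x := if (x : G) = 1 then 1 else A
  map_one' := by simp
  map_mul' x y := by
    rcases mem_zpowers_of_sq hg x.2 with hx | hx <;>
      rcases mem_zpowers_of_sq hg y.2 with hy | hy
    · simp [Subgroup.coe_mul, hx, hy]
    · simp [Subgroup.coe_mul, hx, hy]
    · simp [Subgroup.coe_mul, hx, hy]
    · by_cases h1 : g = 1
      · simp [Subgroup.coe_mul, hx, hy, h1]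
      · simp [Subgroup.coe_mul, hx, hy, hg, h1, hA]

/-- The reflection `x ↦ -x` of `ℤ`. -/
def AZ : Equiv.Perm ℤ := Equiv.subLeft 0

/-- The reflection `x ↦ 1 - x` of `ℤ`. -/
def BZ : Equiv.Perm ℤ := Equiv.subLeft 1

lemma AZ_sq : AZ * AZ = 1 := by
  ext x; simp [AZ, Equiv.Perm.mul_apply]

lemma BZ_sq : BZ * BZ = 1 := by
  ext x; simp [BZ, Equiv.Perm.mul_apply]

lemma AB_pow (n : ℕ) : ((AZ * BZ) ^ n) 0 = -(n : ℤ) := by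
  induction n with
  | zero => simp
  | succ n ih =>
    rw [pow_succ', Equiv.Perm.mul_apply, ih]
    simp [AZ, BZ, Equiv.Perm.mul_apply]
    ring

abbrev a : Coprod (Subgroup.zpowers x1Perm) (Subgroup.zpowers x2Perm) :=
  Coprod.inl ⟨x1Perm, Subgroup.mem_zpowers x1Perm⟩

abbrev b : Coprod (Subgroup.zpowers x1Perm) (Subgroup.zpowers x2Perm) :=
  Coprod.inr ⟨x2Perm, Subgroup.mem_zpowers x2Perm⟩

abbrev t : Coprod (Subgroup.zpowers x1Perm) (Subgroup.zpowers x2Perm) := a * b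

/-- The homomorphism to `Perm ℤ` realizing the infinite dihedral group. -/
def qZ : Coprod (Subgroup.zpowers x1Perm) (Subgroup.zpowers x2Perm) →* Equiv.Perm ℤ :=
  Coprod.lift (invoHom x1Perm x1_sq AZ AZ_sq) (invoHom x2Perm x2_sq BZ BZ_sq)

lemma qZ_a : qZ a = AZ := by
  have : x1Perm ≠ 1 := by decide
  simp [qZ, Coprod.lift_apply_inl, invoHom, this]

lemma qZ_b : qZ b = BZ := by
  have : x2Perm ≠ 1 := by decide
  simp [qZ, Coprod.lift_apply_inr, invoHom, this]

lemma t_not_finOrder : ¬ IsOfFinOrder t := by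
  intro h
  obtain ⟨n, hn, hpow⟩ := isOfFinOrder_iff_pow_eq_one.1 h
  have : qZ (t ^ n) = 1 := by rw [hpow, map_one]
  rw [map_pow, map_mul, qZ_a, qZ_b] at this
  have h0 : ((AZ * BZ) ^ n) 0 = 0 := by rw [this]; rfl
  rw [AB_pow] at h0
  omega

lemma t3_not_finOrder : ¬ IsOfFinOrder (t ^ 3) := by
  intro h
  exact t_not_finOrder (h.of_pow (by norm_num))

lemma a_sq : a * a = 1 := by
  rw [← map_mul, ← map_one Coprod.inl]
  congr 1
  exact Subtype.ext x1_sq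

lemma b_sq : b * b = 1 := by
  rw [← map_mul, ← map_one Coprod.inr]
  congr 1
  exact Subtype.ext x2_sq

lemma a_inv : a⁻¹ = a := inv_eq_of_mul_eq_one_right a_sq
lemma b_inv : b⁻¹ = b := inv_eq_of_mul_eq_one_right b_sq

lemma conj_t : a * t * a⁻¹ = t⁻¹ := by
  rw [a_inv]
  show a * (a * b) * a = (a * b)⁻¹
  rw [mul_inv_rev, a_inv, b_inv, ← mul_assoc, a_sq, one_mul]

lemma a_zpow_t (k : ℤ) : a * t ^ k = t ^ (-k) * a := by
  have h := map_zpow (MulAut.conj a) t k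
  simp only [MulAut.conj_apply] at h
  rw [conj_t] at h
  have h' : a * t ^ k * a⁻¹ = t ^ (-k) := by rw [h, inv_zpow, ← zpow_neg]
  calc a * t ^ k = a * t ^ k * a⁻¹ * a := by rw [inv_mul_cancel_right]
    _ = t ^ (-k) * a := by rw [h']

lemma structure_lemma (g : Coprod (Subgroup.zpowers x1Perm) (Subgroup.zpowers x2Perm)) :
    ∃ n : ℤ, g = t ^ n ∨ g = t ^ n * a := by
  induction g using Coprod.induction_on with
  | inl m =>
    rcases mem_zpowers_of_sq x1_sq m.2 with hm | hm
    · exact ⟨0, Or.inl (by rw [zpow_zero, ← map_one Coprod.inl]; congr 1; exact Subtype.ext hm)⟩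
    · refine ⟨0, Or.inr ?_⟩
      rw [zpow_zero, one_mul]
      congr 1
      exact Subtype.ext hm
  | inr m =>
    rcases mem_zpowers_of_sq x2_sq m.2 with hm | hm
    · exact ⟨0, Or.inl (by rw [zpow_zero, ← map_one Coprod.inr]; congr 1; exact Subtype.ext hm)⟩
    · refine ⟨-1, Or.inr ?_⟩
      have hb : Coprod.inr m = b := by congr 1; exact Subtype.ext hm
      rw [hb]
      have : t ^ (-1 : ℤ) * a = b := by
        rw [zpow_neg_one]
        show (a * b)⁻¹ * a = b
        rw [mul_inv_rev, a_inv, b_inv, mul_assoc, a_sq, mul_one]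
      rw [this]
  | mul x y hx hy =>
    obtain ⟨n, hn⟩ := hx
    obtain ⟨m, hm⟩ := hy
    rcases hn with hn | hn <;> rcases hm with hm | hm <;> subst hn <;> subst hm
    · exact ⟨n + m, Or.inl (by rw [zpow_add])⟩
    · exact ⟨n + m, Or.inr (by rw [zpow_add, mul_assoc])⟩
    · refine ⟨n - m, Or.inr ?_⟩
      rw [mul_assoc, a_zpow_t, ← mul_assoc, ← zpow_add]
      ring_nf
    · refine ⟨n - m, Or.inl ?_⟩
      rw [mul_assoc, ← mul_assoc a, a_zpow_t, mul_assoc, a_sq, mul_one, ← zpow_add]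
      ring_nf

lemma pS3'_a : pS3' a = x1Perm := by
  simp [pS3', Coprod.lift_apply_inl]

lemma pS3'_b : pS3' b = x2Perm := by
  simp [pS3', Coprod.lift_apply_inr]

lemma pS3'_t : pS3' t = x1Perm * x2Perm := by
  rw [map_mul, pS3'_a, pS3'_b]

lemma orderOf_c : orderOf (x1Perm * x2Perm) = 3 := by
  have h3 : (x1Perm * x2Perm) ^ 3 = 1 := by decide
  have hne : x1Perm * x2Perm ≠ 1 := by decide
  haveI : Fact (Nat.Prime 3) := ⟨by norm_num⟩
  exact orderOf_eq_prime h3 hne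

end S3Aux

open S3Aux

/-- `p : ⟨x₁⟩ ∗ ⟨x₂⟩ → S₃` is surjective and its kernel is the infinite cyclic
subgroup generated by `(ι₁(x₁) ι₂(x₂))³`; in particular `Ker p ≅ ℤ`. -/
theorem s3_coxeter_free_product_kernel :
    Function.Surjective pS3' ∧
      pS3'.ker = Subgroup.zpowers
        ((Coprod.inl ⟨x1Perm, Subgroup.mem_zpowers x1Perm⟩ *
          Coprod.inr ⟨x2Perm, Subgroup.mem_zpowers x2Perm⟩) ^ 3) ∧
      Nonempty (pS3'.ker ≃* Multiplicative ℤ) := by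
  have hsurj : Function.Surjective pS3' := by
    intro g
    have hcases : ∀ g : Equiv.Perm (Fin 3), g = 1 ∨ g = x1Perm ∨ g = x2Perm ∨
        g = x1Perm * x2Perm ∨ g = x2Perm * x1Perm ∨ g = x1Perm * x2Perm * x1Perm := by decide
    rcases hcases g with h | h | h | h | h | h <;> subst h
    · exact ⟨1, map_one _⟩
    · exact ⟨a, pS3'_a⟩
    · exact ⟨b, pS3'_b⟩
    · exact ⟨a * b, by rw [map_mul, pS3'_a, pS3'_b]⟩
    · exact ⟨b * a, by rw [map_mul, pS3'_a, pS3'_b]⟩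
    · exact ⟨a * b * a, by rw [map_mul, map_mul, pS3'_a, pS3'_b]⟩
  have hker : pS3'.ker = Subgroup.zpowers (t ^ 3) := by
    ext g
    constructor
    · intro hg
      rw [MonoidHom.mem_ker] at hg
      obtain ⟨n, hn | hn⟩ := structure_lemma g
      · subst hn
        rw [map_zpow, pS3'_t] at hg
        rw [← orderOf_dvd_iff_zpow_eq_one, orderOf_c] at hg
        obtain ⟨k, rfl⟩ := hg
        refine ⟨k, ?_⟩
        show (t ^ 3) ^ k = t ^ (((3:ℕ):ℤ) * k)
        rw [← zpow_natCast t 3, ← zpow_mul]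
      · exfalso
        subst hn
        rw [map_mul, map_zpow, pS3'_t, pS3'_a] at hg
        have hs := congrArg Equiv.Perm.sign hg
        rw [map_mul, map_zpow] at hs
        have h1 : Equiv.Perm.sign (x1Perm * x2Perm) = 1 := by decide
        have h2 : Equiv.Perm.sign x1Perm = -1 := by decide
        rw [h1, h2, one_zpow, one_mul, map_one] at hs
        exact absurd hs (by decide)
    · intro hg
      obtain ⟨k, rfl⟩ := hg
      rw [MonoidHom.mem_ker, map_zpow, map_pow, pS3'_t]
      have h3 : (x1Perm * x2Perm) ^ 3 = 1 := by decide
      rw [h3, one_zpow]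
  refine ⟨hsurj, hker, ?_⟩
  -- the kernel is infinite cyclic
  set w := t ^ 3 with hw
  have hwfin : ¬ IsOfFinOrder w := t3_not_finOrder
  have hinj : Function.Injective (fun n : ℤ => w ^ n) :=
    injective_zpow_iff_not_isOfFinOrder.2 hwfin
  let gen : Subgroup.zpowers w := ⟨w, Subgroup.mem_zpowers w⟩
  let ψ : Multiplicative ℤ →* Subgroup.zpowers w := zpowersHom _ gen
  have hψ : ∀ n : Multiplicative ℤ, ((ψ n : Subgroup.zpowers w) : _) = w ^ n.toAdd := by
    intro n
    simp [ψ, gen, zpowersHom]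
  have hbij : Function.Bijective ψ := by
    constructor
    · intro n m hnm
      have : w ^ n.toAdd = w ^ m.toAdd := by rw [← hψ, ← hψ, hnm]
      exact hinj this
    · rintro ⟨x, k, rfl⟩
      exact ⟨Multiplicative.ofAdd k, Subtype.ext (hψ _)⟩
  exact ⟨(MulEquiv.subgroupCongr hker).trans (MulEquiv.ofBijective ψ hbij).symm⟩
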